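/- Let D, t ∈ ℝ³, let N' be the single-qubit normal-form map with parameters (D,t), and let k ≥ 1. Let H be a Hermitian 2^k×2^k matrix of the form H = Σ_{P∈{X,Y,Z}} Σ_{Q∈P_{k−1}} b_{P,Q} · (P⊗Q) with real coefficients b_{P,Q}, i.e., every Pauli term of H is non-identity on the first qubit. Then ‖(N'† ⊗ id)(H)‖_F² ≤ Υ(D,t) · ‖H‖_F², where N'† acts on the first qubit and id is the identity map on the remaining k−1 qubits. -/

import Mathlib

open scoped Kronecker
open Matrix
open scoped ComplexOrder

noncomputable section

abbrev QMat := Matrix (Fin 2) (Fin 2) ℂ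

abbrev NMat (n : ℕ) := Matrix (Fin n → Fin 2) (Fin n → Fin 2) ℂ

/-- The four single-qubit Pauli matrices `I, X, Y, Z`. -/
def pauli : Fin 4 → QMat :=
  ![1, !![0, 1; 1, 0], !![0, -Complex.I; Complex.I, 0], !![1, 0; 0, -1]]

/-- The non-identity Paulis `X, Y, Z`. -/
def pauliXYZ (i : Fin 3) : QMat := pauli i.succ

/-- The `n`-qubit Pauli string indexed by `s : Fin n → Fin 4`. -/
def pauliString {n : ℕ} (s : Fin n → Fin 4) : NMat n :=
  Matrix.of fun i j => ∏ k, pauli (s k) (i k) (j k)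

/-- Support of a Pauli string. -/
def psupp {n : ℕ} (s : Fin n → Fin 4) : Finset (Fin n) :=
  Finset.univ.filter fun k => s k ≠ 0

/-- The observable with real Pauli coefficients `a`. -/
def obsOf {n : ℕ} (a : (Fin n → Fin 4) → ℝ) : NMat n :=
  ∑ s : Fin n → Fin 4, (a s : ℂ) • pauliString s

/-- Normalized Frobenius norm squared, `‖M‖_F² = Tr[Mᴴ M]/dim`. -/
def frobSq {m : Type*} [Fintype m] (M : Matrix m m ℂ) : ℝ :=
  (Matrix.trace (Mᴴ * M)).re / (Fintype.card m : ℝ)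

def IsUnitary {m : Type*} [Fintype m] [DecidableEq m] (U : Matrix m m ℂ) : Prop :=
  U * Uᴴ = 1 ∧ Uᴴ * U = 1

/-- Hilbert–Schmidt adjoint of a (linear) map on matrices:
`Φ†(A) i j = conj (Tr[Aᴴ Φ(E_{ij})])`. -/
def hsAdj {m : Type*} [Fintype m] [DecidableEq m]
    (Φ : Matrix m m ℂ → Matrix m m ℂ) (A : Matrix m m ℂ) : Matrix m m ℂ :=
  Matrix.of fun i j => (starRingEnd ℂ) (Matrix.trace (Aᴴ * Φ (Matrix.single i j 1)))

/-- Pauli transfer matrix entry of a single-qubit map. -/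
def ptm (Φ : QMat → QMat) (a b : Fin 4) : ℂ :=
  Matrix.trace (pauli a * Φ (pauli b)) / 2

/-- Tensor product `Φ 0 ⊗ Φ 1 ⊗ ⋯ ⊗ Φ (n-1)` of single-qubit (linear) maps,
defined via the Pauli transfer matrices. -/
def tensorMap {n : ℕ} (Φ : Fin n → QMat → QMat) (M : NMat n) : NMat n :=
  ∑ s : Fin n → Fin 4, ∑ t : Fin n → Fin 4,
    ((∏ k, ptm (Φ k) (s k) (t k)) * (Matrix.trace (pauliString t * M) / ((2 : ℂ) ^ n))) •
      pauliString s

/-- `n`-fold tensor power `Φ^{⊗n}` of a single-qubit (linear) map. -/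
def tensorPow (n : ℕ) (Φ : QMat → QMat) : NMat n → NMat n :=
  tensorMap fun _ => Φ

/-- Tensor product of `n` single-qubit matrices. -/
def qprod {n : ℕ} (V : Fin n → QMat) : NMat n :=
  Matrix.of fun i j => ∏ k, V k (i k) (j k)

/-- The single-qubit normal-form map `N'` with parameters `(D, t)`:
`N'(I) = I + Σ t_i σ_i` and `N'(σ_i) = D_i σ_i`. -/
def normalForm (D t : Fin 3 → ℝ) (M : QMat) : QMat :=
  (Matrix.trace M / 2) • (1 + ∑ i, (t i : ℂ) • pauliXYZ i) +
    ∑ i, ((D i : ℂ) * (Matrix.trace (pauliXYZ i * M) / 2)) • pauliXYZ i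

/-- `Υ(D,t) = max_{‖a‖₂=1} Σ_i a_i² D_i² + (Σ_i a_i t_i)²`. -/
def Upsilon (D t : Fin 3 → ℝ) : ℝ :=
  sSup { r : ℝ | ∃ a : Fin 3 → ℝ, (∑ i, a i ^ 2) = 1 ∧
    r = (∑ i, a i ^ 2 * D i ^ 2) + (∑ i, a i * t i) ^ 2 }

/-- Choi matrix of a single-qubit map. -/
def choi (Φ : QMat → QMat) : Matrix (Fin 2 × Fin 2) (Fin 2 × Fin 2) ℂ :=
  Matrix.of fun p q => Φ (Matrix.single p.1 q.1 1) p.2 q.2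

/-- A single-qubit quantum channel: linear, trace preserving, completely positive. -/
structure IsChannel (Φ : QMat → QMat) : Prop where
  linear : IsLinearMap ℂ Φ
  tracePreserving : ∀ M, Matrix.trace (Φ M) = Matrix.trace M
  completelyPositive : (choi Φ).PosSemidef

/-- Unitary 1-design (finitely supported distribution). -/
def IsOneDesign {ι : Type*} [Fintype ι] (w : ι → ℝ) (W : ι → QMat) : Prop :=
  ∀ M : QMat, ∑ i, (w i : ℂ) • (W i * M * (W i)ᴴ) = (Matrix.trace M / 2) • (1 : QMat)

/-- The swap (flip) operator on two qubits. -/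
def swapOp : Matrix (Fin 2 × Fin 2) (Fin 2 × Fin 2) ℂ :=
  Matrix.of fun p q => if p.1 = q.2 ∧ p.2 = q.1 then 1 else 0

/-- Unitary 2-design: the twirl of any `M` matches the Haar value
`c_I • 1 + c_F • F` (closed form of the Haar average on `U(2)`). -/
def IsTwoDesign {ι : Type*} [Fintype ι] (w : ι → ℝ) (W : ι → QMat) : Prop :=
  ∀ M : Matrix (Fin 2 × Fin 2) (Fin 2 × Fin 2) ℂ,
    ∑ i, (w i : ℂ) • ((W i ⊗ₖ W i) * M * (W i ⊗ₖ W i)ᴴ) =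
      ((Matrix.trace M - Matrix.trace (swapOp * M) / 2) / 3) •
          (1 : Matrix (Fin 2 × Fin 2) (Fin 2 × Fin 2) ℂ) +
        ((Matrix.trace (swapOp * M) - Matrix.trace M / 2) / 3) • swapOp

/-- `η`-approximate scrambler (finitely supported distribution over `U(2)`). -/
def IsApproxScrambler {ι : Type*} [Fintype ι] (η : ℝ) (w : ι → ℝ) (U : ι → QMat) : Prop :=
  (∀ a b : Fin 4, a ≠ b →
      ∑ i, (w i : ℂ) • (((U i)ᴴ * pauli a * U i) ⊗ₖ ((U i)ᴴ * pauli b * U i)) = 0) ∧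
    ∀ a b : Fin 3,
      ∑ i, w i * ((Matrix.trace (pauliXYZ a * U i * pauliXYZ b * (U i)ᴴ)).re / 2) ^ 2 ≤
        (1 + 2 * η) / 3

/-- Locally unbiased distribution over linear maps on `n`-qubit matrices. -/
def LocallyUnbiased (n : ℕ) {ι : Type*} [Fintype ι] (w : ι → ℝ)
    (C : ι → NMat n → NMat n) : Prop :=
  ∃ (m : ℕ) (v : Fin n → Fin m → ℝ) (W : Fin n → Fin m → QMat),
    (∀ j k, 0 ≤ v j k) ∧ (∀ j, ∑ k, v j k = 1) ∧ (∀ j k, IsUnitary (W j k)) ∧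
      (∀ j, IsOneDesign (v j) (W j)) ∧
      ∀ A B : NMat n,
        ∑ i, (w i : ℂ) • (C i A ⊗ₖ C i B) =
          ∑ i, ∑ f : Fin n → Fin m,
            ((w i * ∏ j, v j (f j) : ℝ) : ℂ) •
              (C i (qprod (fun j => W j (f j)) * A * (qprod fun j => W j (f j))ᴴ) ⊗ₖ
                C i (qprod (fun j => W j (f j)) * B * (qprod fun j => W j (f j))ᴴ))

/-- Pauli-invariant distribution over linear maps on `n`-qubit matrices. -/
def PauliInvariant (n : ℕ) {ι : Type*} [Fintype ι] (w : ι → ℝ)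
    (C : ι → NMat n → NMat n) : Prop :=
  ∀ A B : NMat n,
    ∑ i, (w i : ℂ) • (C i A ⊗ₖ C i B) =
      ((4 : ℂ) ^ n)⁻¹ • ∑ r : Fin n → Fin 4, ∑ i, (w i : ℂ) •
        (C i (pauliString r * A * pauliString r) ⊗ₖ C i (pauliString r * B * pauliString r))

/-- Fourier coefficient `Φ_γ(C) = Π_j 2^{-n} Tr[P_j C_j(P_{j-1})]` of a Pauli path. -/
def pathCoeff {n L : ℕ} (Cs : Fin L → NMat n → NMat n)
    (γ : Fin (L + 1) → Fin n → Fin 4) : ℂ :=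
  ∏ j : Fin L,
    (Matrix.trace (pauliString (γ j.succ) * Cs j (pauliString (γ j.castSucc))) / ((2 : ℂ) ^ n))

/-- Path weight `|γ| = Σ_{j=1}^L |P_j|`. -/
def pathWeight {n L : ℕ} (γ : Fin (L + 1) → Fin n → Fin 4) : ℕ :=
  ∑ j : Fin L, (psupp (γ j.succ)).card

/-- The (non-physical) map `Ñ_p` with `Ñ_p(I) = (N(I) - pI)/(1-p)` and
`Ñ_p(σ) = N(σ)/(1-p)` for `σ ∈ {X,Y,Z}`. -/
def tildeMap (N : QMat → QMat) (p : ℝ) (M : QMat) : QMat :=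
  (Matrix.trace M / 2) • (((1 : ℂ) - (p : ℂ))⁻¹ • (N 1 - (p : ℂ) • (1 : QMat))) +
    ∑ i : Fin 3, (Matrix.trace (pauliXYZ i * M) / 2) • (((1 : ℂ) - (p : ℂ))⁻¹ • N (pauliXYZ i))

/-- The layers of an `L`-layered noisy circuit: `C_j(ρ) = N^{⊗n}(U_j ρ U_j†)` for `j < L`,
and the last layer is followed by the single-qubit layer `V`. -/
def layerMaps {n L : ℕ} (Nm : QMat → QMat) (U : Fin L → NMat n) (Vt : NMat n)
    (j : Fin L) (ρ : NMat n) : NMat n :=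
  if j.val = L - 1 then Vt * tensorPow n Nm (U j * ρ * (U j)ᴴ) * Vtᴴ
  else tensorPow n Nm (U j * ρ * (U j)ᴴ)

/-- Composition `C_L ∘ ⋯ ∘ C_1` of the layers. -/
def circuitOf {n L : ℕ} (lm : Fin L → NMat n → NMat n) (ρ : NMat n) : NMat n :=
  (List.finRange L).foldl (fun σ j => lm j σ) ρ

/-- Operator (spectral) norm of a matrix, as the `ℓ²→ℓ²` operator norm. -/
def specNorm {m : Type*} [Fintype m] (M : Matrix m m ℂ) : ℝ :=
  Real.sqrt (sSup { r : ℝ | ∃ v : m → ℂ,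
    (∑ x, Complex.normSq (v x)) = 1 ∧ r = ∑ x, Complex.normSq (M.mulVec v x) })

/-- Trace norm `‖M‖₁ = Tr √(Mᴴ M)` (sum of singular values). -/
def traceNorm {m : Type*} [Fintype m] [DecidableEq m] (M : Matrix m m ℂ) : ℝ :=
  (Matrix.trace ((Matrix.posSemidef_conjTranspose_mul_self M).1.eigenvectorUnitary.1 *
    Matrix.diagonal (((↑) : ℝ → ℂ) ∘ Real.sqrt ∘ (Matrix.posSemidef_conjTranspose_mul_self M).1.eigenvalues) *
    (star (Matrix.posSemidef_conjTranspose_mul_self M).1.eigenvectorUnitary : Matrix m m ℂ))).re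


/-! In the Pauli basis `N'† ⊗ id` acts on the first tensor factor only, so the Pauli coefficients
of `H` split into blocks indexed by the string `r` on the last `k - 1` qubits, and both squared
norms are sums over these blocks (Parseval). Since `N'†(P) = D_P P + t_P I`, a block
`c = (b_{X,r}, b_{Y,r}, b_{Z,r})` is sent to `(⟨c, t⟩, D_X c_X, D_Y c_Y, D_Z c_Z)`, whose squared
length `Σ D_i² c_i² + ⟨c, t⟩²` is at most `Υ(D,t) ‖c‖²` by the definition of `Υ` applied to
`c / ‖c‖`. -/

lemma pauli_conjTranspose (a : Fin 4) : (pauli a)ᴴ = pauli a := by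
  ext i j
  fin_cases a <;> fin_cases i <;> fin_cases j <;> simp [pauli]

lemma trace_pauli_mul_pauli (a b : Fin 4) :
    trace (pauli a * pauli b) = if a = b then 2 else 0 := by
  fin_cases a <;> fin_cases b <;>
    simp [pauli, one_fin_two, trace_fin_two, Complex.ext_iff] <;> norm_num

lemma hsAdj_normalForm_pauliXYZ (D t : Fin 3 → ℝ) (i : Fin 3) :
    hsAdj (normalForm D t) (pauliXYZ i) = (D i : ℂ) • pauliXYZ i + (t i : ℂ) • 1 := by
  ext a b
  simp only [hsAdj, pauliXYZ, pauli_conjTranspose, of_apply]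
  fin_cases i <;> fin_cases a <;> fin_cases b <;>
    simp [mul_apply, map_ofNat, normalForm, pauliXYZ, pauli, one_fin_two, trace_fin_two,
      Fin.sum_univ_three, Matrix.single, Complex.ext_iff, vecHead, vecTail] <;> ring

lemma ptm_hsAdj_normalForm_succ (D t : Fin 3 → ℝ) (a : Fin 4) (i : Fin 3) :
    ptm (hsAdj (normalForm D t)) a i.succ =
      (if a = i.succ then (D i : ℂ) else 0) + if a = 0 then (t i : ℂ) else 0 := by
  have h := trace_pauli_mul_pauli a 0
  rw [show pauli 0 = 1 from rfl, mul_one] at h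
  rw [ptm, ← pauliXYZ, hsAdj_normalForm_pauliXYZ, mul_add, trace_add, Matrix.mul_smul,
    Matrix.mul_smul, trace_smul, trace_smul, mul_one, h, pauliXYZ, trace_pauli_mul_pauli]
  split_ifs <;> simp_all [(Fin.succ_ne_zero i).symm]

lemma ptm_id (a b : Fin 4) : ptm id a b = if a = b then 1 else 0 := by
  rw [ptm, id_eq, trace_pauli_mul_pauli]
  split_ifs <;> norm_num

lemma qprod_mul_qprod {n : ℕ} (V W : Fin n → QMat) : qprod V * qprod W = qprod (V * W) := by
  ext i j
  simp only [qprod, mul_apply, of_apply, Pi.mul_apply, ← Finset.prod_mul_distrib]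
  exact (Fintype.prod_sum fun k x => V k (i k) x * W k x (j k)).symm

lemma trace_qprod {n : ℕ} (V : Fin n → QMat) : trace (qprod V) = ∏ k, trace (V k) := by
  simp only [trace, diag, qprod, of_apply]
  exact (Fintype.prod_sum fun k x => V k x x).symm

lemma conjTranspose_qprod {n : ℕ} (V : Fin n → QMat) : (qprod V)ᴴ = qprod fun k => (V k)ᴴ := by
  ext i j
  simp [qprod, conjTranspose_apply]

lemma pauliString_eq_qprod {n : ℕ} (s : Fin n → Fin 4) : pauliString s = qprod (pauli ∘ s) := rfl

lemma pauliString_conjTranspose {n : ℕ} (s : Fin n → Fin 4) : (pauliString s)ᴴ = pauliString s := by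
  simp only [pauliString_eq_qprod, conjTranspose_qprod, Function.comp_apply, pauli_conjTranspose]
  rfl

lemma trace_pauliString_mul_pauliString {n : ℕ} (s u : Fin n → Fin 4) :
    trace (pauliString s * pauliString u) = if s = u then 2 ^ n else 0 := by
  rw [pauliString_eq_qprod, pauliString_eq_qprod, qprod_mul_qprod, trace_qprod]
  simp only [Pi.mul_apply, Function.comp_apply, trace_pauli_mul_pauli]
  split_ifs with h
  · simp [h]
  · obtain ⟨k, hk⟩ := Function.ne_iff.mp h
    exact Finset.prod_eq_zero (Finset.mem_univ k) (if_neg hk)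

lemma trace_pauliString_mul_sum_smul_pauliString {n : ℕ} (c : (Fin n → Fin 4) → ℂ)
    (u : Fin n → Fin 4) : trace (pauliString u * ∑ s, c s • pauliString s) = 2 ^ n * c u := by
  simp [Finset.mul_sum, trace_sum, trace_pauliString_mul_pauliString, mul_comm]

lemma frobSq_sum_smul_pauliString {n : ℕ} (c : (Fin n → Fin 4) → ℂ) :
    frobSq (∑ s, c s • pauliString s) = ∑ s, Complex.normSq (c s) := by
  have hconj : (∑ s, c s • pauliString s)ᴴ = ∑ s, star (c s) • pauliString s := by
    simp [conjTranspose_sum, conjTranspose_smul, pauliString_conjTranspose]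
  have hcard : (Fintype.card (Fin n → Fin 2) : ℝ) = 2 ^ n := by simp
  rw [frobSq, hconj, Finset.sum_mul, trace_sum, Complex.re_sum, Finset.sum_div, hcard]
  refine Finset.sum_congr rfl fun s _ => ?_
  have hterm : star (c s) * (2 ^ n * c s) = ((Complex.normSq (c s) * 2 ^ n : ℝ) : ℂ) := by
    push_cast
    rw [Complex.normSq_eq_conj_mul_self, Complex.star_def]
    ring
  rw [Matrix.smul_mul, trace_smul, trace_pauliString_mul_sum_smul_pauliString, smul_eq_mul, hterm,
    Complex.ofReal_re]
  field_simp

lemma frobSq_obsOf {n : ℕ} (b : (Fin n → Fin 4) → ℝ) : frobSq (obsOf b) = ∑ s, b s ^ 2 := by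
  simp only [obsOf, frobSq_sum_smul_pauliString, Complex.normSq_ofReal, sq]

lemma tensorMap_obsOf {n : ℕ} (Φ : Fin n → QMat → QMat) (b : (Fin n → Fin 4) → ℝ) :
    tensorMap Φ (obsOf b) =
      ∑ s, (∑ u, (∏ k, ptm (Φ k) (s k) (u k)) * (b u : ℂ)) • pauliString s := by
  refine Finset.sum_congr rfl fun s _ => ?_
  rw [Finset.sum_smul]
  refine Finset.sum_congr rfl fun u _ => ?_
  rw [obsOf, trace_pauliString_mul_sum_smul_pauliString, mul_div_cancel_left₀ _ (by positivity)]

lemma sum_pi_fin_succ {m : ℕ} {α M : Type*} [Fintype α] [AddCommMonoid M]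
    (f : (Fin (m + 1) → α) → M) : ∑ s, f s = ∑ q, ∑ r, f (Fin.cons q r) :=
  (Fintype.sum_equiv (Fin.consEquiv fun _ => α) _ _ fun _ => rfl).symm.trans
    (Fintype.sum_prod_type _)

lemma tensorMap_obsOf_of_succ_eq_id {m : ℕ} (Φ : Fin (m + 1) → QMat → QMat)
    (hΦ : ∀ i : Fin m, Φ i.succ = id) (b : (Fin (m + 1) → Fin 4) → ℝ) :
    tensorMap Φ (obsOf b) =
      ∑ s, (∑ q, ptm (Φ 0) (s 0) q * (b (Fin.cons q (Fin.tail s)) : ℂ)) • pauliString s := by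
  rw [tensorMap_obsOf]
  refine Finset.sum_congr rfl fun s _ => ?_
  congr 1
  rw [sum_pi_fin_succ]
  refine Finset.sum_congr rfl fun q _ => ?_
  have hprod : ∀ r, ∏ k, ptm (Φ k) (s k) (Fin.cons q r k) =
      ptm (Φ 0) (s 0) q * if Fin.tail s = r then 1 else 0 := by
    intro r
    simp only [Fin.prod_univ_succ, Fin.cons_zero, Fin.cons_succ, hΦ, ptm_id, Finset.prod_boole,
      Finset.mem_univ, forall_const, funext_iff, Fin.tail]
  simp only [hprod, mul_ite, mul_one, mul_zero, ite_mul, zero_mul, Finset.sum_ite_eq,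
    Finset.mem_univ, if_true]

lemma frobSq_tensorMap_obsOf_of_succ_eq_id {m : ℕ} (Φ : Fin (m + 1) → QMat → QMat)
    (hΦ : ∀ i : Fin m, Φ i.succ = id) (b : (Fin (m + 1) → Fin 4) → ℝ) :
    frobSq (tensorMap Φ (obsOf b)) =
      ∑ r, ∑ q, Complex.normSq (∑ q', ptm (Φ 0) q q' * (b (Fin.cons q' r) : ℂ)) := by
  rw [tensorMap_obsOf_of_succ_eq_id Φ hΦ, frobSq_sum_smul_pauliString, sum_pi_fin_succ,
    Finset.sum_comm]
  simp only [Fin.cons_zero, Fin.tail_cons]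

lemma le_Upsilon (D t : Fin 3 → ℝ) {a : Fin 3 → ℝ} (ha : ∑ i, a i ^ 2 = 1) :
    (∑ i, a i ^ 2 * D i ^ 2) + (∑ i, a i * t i) ^ 2 ≤ Upsilon D t := by
  refine le_csSup ⟨(∑ i, D i ^ 2) + ∑ i, t i ^ 2, ?_⟩ ⟨a, ha, rfl⟩
  rintro r ⟨a, ha, rfl⟩
  have hD : ∑ i, a i ^ 2 * D i ^ 2 ≤ ∑ i, D i ^ 2 := by
    refine Finset.sum_le_sum fun i _ => mul_le_of_le_one_left (sq_nonneg _) ?_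
    exact ha ▸ Finset.single_le_sum (fun j _ => sq_nonneg (a j)) (Finset.mem_univ i)
  have ht : (∑ i, a i * t i) ^ 2 ≤ ∑ i, t i ^ 2 := by
    simpa [ha] using Finset.sum_mul_sq_le_sq_mul_sq Finset.univ a t
  exact add_le_add hD ht

lemma sum_sq_mul_sq_add_sq_sum_le_Upsilon_mul (D t c : Fin 3 → ℝ) :
    (∑ i, c i ^ 2 * D i ^ 2) + (∑ i, c i * t i) ^ 2 ≤ Upsilon D t * ∑ i, c i ^ 2 := by
  set N := ∑ i, c i ^ 2
  rcases (Finset.sum_nonneg fun i _ => sq_nonneg (c i) : 0 ≤ N).eq_or_lt with hN | hN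
  · have hc : ∀ i, c i = 0 := fun i => by
      simpa using (Finset.sum_eq_zero_iff_of_nonneg fun i _ => sq_nonneg (c i)).mp hN.symm i
    simp [N, hc]
  have hs : √N ^ 2 = N := Real.sq_sqrt hN.le
  have key := le_Upsilon D t (a := fun i => c i / √N) (by
    simp only [div_pow, hs, ← Finset.sum_div]
    exact div_self hN.ne')
  simp only [div_pow, hs, div_mul_eq_mul_div, ← Finset.sum_div, ← add_div] at key
  rwa [div_le_iff₀ hN] at key

lemma sum_normSq_ptm_hsAdj_normalForm_le (D t : Fin 3 → ℝ) (c : Fin 4 → ℝ) (hc : c 0 = 0) :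
    ∑ q, Complex.normSq (∑ q', ptm (hsAdj (normalForm D t)) q q' * (c q' : ℂ)) ≤
      Upsilon D t * ∑ q, c q ^ 2 := by
  have hzero : ∑ q', ptm (hsAdj (normalForm D t)) 0 q' * (c q' : ℂ) =
      ((∑ i, c i.succ * t i : ℝ) : ℂ) := by
    simp [Fin.sum_univ_succ (n := 3), hc, ptm_hsAdj_normalForm_succ, (Fin.succ_ne_zero _).symm,
      mul_comm]
  have hsucc : ∀ j : Fin 3, ∑ q', ptm (hsAdj (normalForm D t)) j.succ q' * (c q' : ℂ) =
      ((c j.succ * D j : ℝ) : ℂ) := by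
    intro j
    simp [Fin.sum_univ_succ (n := 3), hc, ptm_hsAdj_normalForm_succ, mul_comm]
  rw [Fin.sum_univ_succ, Fin.sum_univ_succ (f := fun q => c q ^ 2), hc, hzero]
  simp only [hsucc, Complex.normSq_ofReal, ← sq, mul_pow]
  have := sum_sq_mul_sq_add_sq_sum_le_Upsilon_mul D t (fun i => c i.succ)
  linarith

/-- One-step contraction: if every Pauli term of `H` is non-identity on
the first qubit, then `‖(N'† ⊗ id_{k-1})(H)‖_F² ≤ Υ(D,t)·‖H‖_F²`. -/
theorem stmt_1 (D t : Fin 3 → ℝ) (k : ℕ) (hk : 0 < k)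
    (b : (Fin k → Fin 4) → ℝ)
    (hb : ∀ s : Fin k → Fin 4, s ⟨0, hk⟩ = 0 → b s = 0) :
    frobSq (tensorMap
        (fun j => if j = ⟨0, hk⟩ then hsAdj (normalForm D t) else id) (obsOf b)) ≤
      Upsilon D t * frobSq (obsOf b) := by
  obtain ⟨m, rfl⟩ := Nat.exists_eq_add_one_of_ne_zero hk.ne'
  set Φ : Fin (m + 1) → QMat → QMat :=
    fun j => if j = ⟨0, hk⟩ then hsAdj (normalForm D t) else id
  have hΦ : ∀ i : Fin m, Φ i.succ = id := fun i => if_neg i.succ_ne_zero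
  rw [frobSq_tensorMap_obsOf_of_succ_eq_id Φ hΦ, frobSq_obsOf, sum_pi_fin_succ,
    Finset.sum_comm (s := Finset.univ (α := Fin 4)), Finset.mul_sum]
  gcongr with r
  exact sum_normSq_ptm_hsAdj_normalForm_le D t (fun q => b (Fin.cons q r)) (hb _ rfl)

end
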